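/- arXiv:2010.03811 — 3 statements merged into one kernel-verified Lean document; each statement's English description precedes it below -/
import Mathlib

section
/- Let $F$ be a number field with ring of integers $\mathcal{O}_F$, and let $f$ be a non-negative real-valued function on the nonzero ideals of $\mathcal{O}_F$ with $f(\mathcal{O}_F)=1$ which is multiplicative, i.e. $f(\mathfrak{m}\mathfrak{n})=f(\mathfrak{m})f(\mathfrak{n})$ whenever $\mathfrak{m}$ and $\mathfrak{n}$ are coprime nonzero ideals. Assume there exist positive constants $A$ and $B$ such that for every real $x>1$ one has $\sum_{\mathrm{N}(\mathfrak{p})\le x} f(\mathfrak{p})\log \mathrm{N}(\mathfrak{p}) \le A x$ (sum over nonzero prime ideals $\mathfrak{p}$) and $\sum_{\mathfrak{p}} \sum_{\alpha \ge 2} \frac{f(\mathfrak{p}^{\alpha})}{\mathrm{N}(\mathfrak{p}^{\alpha})} \log \mathrm{N}(\mathfrak{p}^{\alpha}) \le B$. Then for every real $x>1$, $\sum_{\mathrm{N}(\mathfrak{n})\le x} f(\mathfrak{n}) \le (A+B+1) \frac{x}{\log x} \sum_{\mathrm{N}(\mathfrak{n})\le x} \frac{f(\mathfrak{n})}{\mathrm{N}(\mathfrak{n})}$,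 where both sums run over nonzero ideals $\mathfrak{n}$ of $\mathcal{O}_F$ with norm at most $x$. -/
/-!
Write `S(x) = ∑_{N𝔫 ≤ x} f(𝔫)` and `T(x) = ∑_{N𝔫 ≤ x} f(𝔫)/N𝔫`. Splitting
`log x = log (x/N𝔫) + log N𝔫` and using `log t ≤ t` gives
`S(x) log x ≤ x T(x) + ∑_{N𝔫 ≤ x} f(𝔫) log N𝔫`. Writing `log N𝔫` as the sum of `log N(𝔭^a)` over
the exact prime powers `𝔭^a ∥ 𝔫` and using multiplicativity, the last sum is at most
`∑_{𝔭^a} f(𝔭^a) log N(𝔭^a) S(x/N(𝔭^a))`. For `a = 1` we swap the order of summation and use the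
bound `A y` for the prime sum up to `y = x/N𝔪`; for `a ≥ 2` we use `S(y) ≤ y T(x)` and the bound
`B`. Altogether `S(x) log x ≤ (A + B + 1) x T(x)`.
-/

open NumberField Finset UniqueFactorizationMonoid Real
open Ideal (absNorm)
open scoped Classical

lemma sum_comp_le_sum_of_injOn {ι κ M : Type*} [AddCommMonoid M] [PartialOrder M]
    [IsOrderedAddMonoid M] {s : Finset ι} {t : Finset κ} {e : ι → κ} {g : κ → M}
    (hmaps : ∀ i ∈ s, e i ∈ t) (hinj : Set.InjOn e s) (hg : ∀ k ∈ t, 0 ≤ g k) :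
    ∑ i ∈ s, g (e i) ≤ ∑ k ∈ t, g k := by
  rw [← sum_image hinj]
  exact sum_le_sum_of_subset_of_nonneg (image_subset_iff.2 hmaps) fun k hk _ => hg k hk

lemma tsum_subtype_eq_sum {β M : Type*} [AddCommMonoid M] [TopologicalSpace M] {P : β → Prop}
    {s : Finset β} (h : ∀ b, P b ↔ b ∈ s) (g : β → M) :
    ∑' b : {b // P b}, g b = ∑ b ∈ s, g b := by
  rw [← Finset.tsum_subtype, ← (Equiv.subtypeEquivRight h).tsum_eq]
  rfl

lemma sum_sum_le_tsum {ι κ : Type*} {P : ι → Prop} {Q : κ → Prop} {g : ι → κ → ℝ}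
    (hg : ∀ i k, P i → Q k → 0 ≤ g i k)
    (hsum : Summable fun q : {i // P i} × {k // Q k} => g q.1.1 q.2.1)
    {s : Finset ι} {t : Finset κ} (hs : ∀ i ∈ s, P i) (ht : ∀ k ∈ t, Q k) :
    ∑ i ∈ s, ∑ k ∈ t, g i k ≤ ∑' q : {i // P i} × {k // Q k}, g q.1.1 q.2.1 := by
  have := hsum.sum_le_tsum (s.subtype P ×ˢ t.subtype Q) fun q _ => hg _ _ q.1.2 q.2.2
  simp only [sum_product, sum_subtype_of_mem (g _) ht] at this
  rwa [sum_subtype_of_mem (fun i => ∑ k ∈ t, g i k) hs] at this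

section OrdProj

variable {S : Type*} [CommRing S] [IsDedekindDomain S]

/-- Ideal analogues of `ordProj[p] n` and `ordCompl[p] n` on `ℕ`. -/
noncomputable def ordProj (p n : Ideal S) : Ideal S :=
  p ^ (normalizedFactors n).count p

noncomputable def ordCompl (p n : Ideal S) : Ideal S :=
  ∏ q ∈ (normalizedFactors n).toFinset.erase p, ordProj q n

lemma prod_ordProj {n : Ideal S} (hn : n ≠ ⊥) :
    ∏ p ∈ (normalizedFactors n).toFinset, ordProj p n = n := by
  conv_rhs => rw [← Ideal.prod_normalizedFactors_eq_self hn, prod_multiset_count]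
  rfl

lemma ordProj_mul_ordCompl {p n : Ideal S} (hn : n ≠ ⊥) (hp : p ∈ normalizedFactors n) :
    ordProj p n * ordCompl p n = n := by
  rw [ordCompl, mul_prod_erase _ (ordProj · n) (Multiset.mem_toFinset.2 hp), prod_ordProj hn]

lemma ordProj_ne_bot {p n : Ideal S} (hn : n ≠ ⊥) (hp : p ∈ normalizedFactors n) :
    ordProj p n ≠ ⊥ :=
  left_ne_zero_of_mul ((ordProj_mul_ordCompl hn hp).symm ▸ hn)

lemma ordCompl_ne_bot {p n : Ideal S} (hn : n ≠ ⊥) (hp : p ∈ normalizedFactors n) :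
    ordCompl p n ≠ ⊥ :=
  right_ne_zero_of_mul ((ordProj_mul_ordCompl hn hp).symm ▸ hn)

lemma eq_of_count_eq_of_ordCompl_eq {p n n' : Ideal S} (hn : n ≠ ⊥) (hn' : n' ≠ ⊥)
    (hp : p ∈ normalizedFactors n) (hp' : p ∈ normalizedFactors n')
    (hc : (normalizedFactors n).count p = (normalizedFactors n').count p)
    (hm : ordCompl p n = ordCompl p n') : n = n' :=
  calc n = ordProj p n * ordCompl p n := (ordProj_mul_ordCompl hn hp).symm
    _ = ordProj p n' * ordCompl p n' := by rw [ordProj, ordProj, hc, hm]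
    _ = n' := ordProj_mul_ordCompl hn' hp'

lemma isCoprime_ordProj_ordCompl {p n : Ideal S} (hp : p ∈ normalizedFactors n) :
    IsCoprime (ordProj p n) (ordCompl p n) := by
  have isMaximal (q : Ideal S) (hq : q ∈ normalizedFactors n) : q.IsMaximal :=
    have hq := prime_of_normalized_factor q hq
    (Ideal.isPrime_of_prime hq).isMaximal hq.ne_zero
  refine IsCoprime.prod_right fun q hq => IsCoprime.pow (Ideal.isCoprime_iff_sup_eq.2 ?_)
  obtain ⟨hqp, hq⟩ := mem_erase.1 hq
  exact (isMaximal p hp).coprime_of_ne (isMaximal q (Multiset.mem_toFinset.1 hq)) hqp.symm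

end OrdProj

section Norm

variable {S : Type*} [CommRing S] [IsDedekindDomain S] [Module.Free ℤ S] [Module.Finite ℤ S]

lemma absNorm_pos {I : Ideal S} (hI : I ≠ ⊥) : 0 < absNorm I :=
  Nat.pos_of_ne_zero (Ideal.absNorm_eq_zero_iff.not.2 hI)

lemma absNorm_le_of_dvd {I n : Ideal S} (hn : n ≠ ⊥) (h : I ∣ n) : absNorm I ≤ absNorm n :=
  Nat.le_of_dvd (absNorm_pos hn) (Ideal.absNorm_dvd_absNorm_of_le (Ideal.le_of_dvd h))

lemma two_le_absNorm {I : Ideal S} (hI : I ≠ ⊥) (hI' : I ≠ ⊤) : 2 ≤ absNorm I := by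
  have h1 : absNorm I ≠ 1 := Ideal.absNorm_eq_one_iff.not.2 hI'
  have h0 := absNorm_pos hI
  omega

lemma lt_absNorm_pow {I : Ideal S} (hI : I ≠ ⊥) (hI' : I ≠ ⊤) (a : ℕ) :
    a < absNorm (I ^ a) := by
  rw [map_pow]
  exact Nat.lt_two_pow_self.trans_le (Nat.pow_le_pow_left (two_le_absNorm hI hI') a)

lemma log_absNorm_nonneg {I : Ideal S} (hI : I ≠ ⊥) : 0 ≤ log (absNorm I) :=
  log_nonneg (Nat.one_le_cast.2 (absNorm_pos hI))

lemma mul_log_absNorm_eq_sum (f : Ideal S → ℝ)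
    (hf_mult : ∀ m n : Ideal S, m ≠ ⊥ → n ≠ ⊥ → IsCoprime m n → f (m * n) = f m * f n)
    {n : Ideal S} (hn : n ≠ ⊥) :
    f n * log (absNorm n) = ∑ p ∈ (normalizedFactors n).toFinset,
      f (ordProj p n) * log (absNorm (ordProj p n)) * f (ordCompl p n) := by
  have hlog : log (absNorm n) = ∑ p ∈ (normalizedFactors n).toFinset,
      log (absNorm (ordProj p n)) := by
    conv_lhs => rw [← prod_ordProj hn]
    rw [map_prod, Nat.cast_prod, log_prod]
    exact fun p hp => Nat.cast_ne_zero.2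
      (absNorm_pos (ordProj_ne_bot hn (Multiset.mem_toFinset.1 hp))).ne'
  rw [hlog, mul_sum]
  refine sum_congr rfl fun p hp => ?_
  have hp := Multiset.mem_toFinset.1 hp
  have hf := hf_mult _ _ (ordProj_ne_bot hn hp) (ordCompl_ne_bot hn hp)
    (isCoprime_ordProj_ordCompl hp)
  rw [ordProj_mul_ordCompl hn hp] at hf
  rw [hf]
  ring

variable [CharZero S]

lemma finite_setOf_absNorm_le (x : ℝ) :
    {I : Ideal S | I ≠ ⊥ ∧ (absNorm I : ℝ) ≤ x}.Finite :=
  (Ideal.finite_setOfPred_absNorm_le ⌊x⌋₊).subset fun _ hI => Nat.le_floor hI.2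

noncomputable def idealsNormLE (x : ℝ) : Finset (Ideal S) :=
  (finite_setOf_absNorm_le x).toFinset

noncomputable def primesNormLE (x : ℝ) : Finset (Ideal S) :=
  (idealsNormLE x).filter Ideal.IsPrime

lemma mem_idealsNormLE {x : ℝ} {I : Ideal S} :
    I ∈ idealsNormLE x ↔ I ≠ ⊥ ∧ (absNorm I : ℝ) ≤ x :=
  Set.Finite.mem_toFinset _

lemma mem_primesNormLE {x : ℝ} {p : Ideal S} :
    p ∈ primesNormLE x ↔ p ≠ ⊥ ∧ p.IsPrime ∧ (absNorm p : ℝ) ≤ x := by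
  rw [primesNormLE, mem_filter, mem_idealsNormLE]
  tauto

lemma idealsNormLE_mono {x y : ℝ} (h : y ≤ x) : idealsNormLE (S := S) y ⊆ idealsNormLE x :=
  fun _ hI => mem_idealsNormLE.2 ⟨(mem_idealsNormLE.1 hI).1, (mem_idealsNormLE.1 hI).2.trans h⟩

lemma mem_idealsNormLE_and_mem_idealsNormLE_div {x : ℝ} {I J : Ideal S} :
    I ∈ idealsNormLE x ∧ J ∈ idealsNormLE (x / absNorm I) ↔
      I ≠ ⊥ ∧ J ≠ ⊥ ∧ (absNorm I : ℝ) * absNorm J ≤ x := by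
  simp only [mem_idealsNormLE]
  constructor
  · rintro ⟨⟨hI, -⟩, hJ, hJx⟩
    have hNI : (0 : ℝ) < absNorm I := Nat.cast_pos.2 (absNorm_pos hI)
    exact ⟨hI, hJ, by rwa [le_div_iff₀ hNI, mul_comm] at hJx⟩
  · rintro ⟨hI, hJ, h⟩
    have hNI : (0 : ℝ) < absNorm I := Nat.cast_pos.2 (absNorm_pos hI)
    have hNJ : (1 : ℝ) ≤ absNorm J := Nat.one_le_cast.2 (absNorm_pos hJ)
    refine ⟨⟨hI, (le_mul_of_one_le_right hNI.le hNJ).trans h⟩, hJ, ?_⟩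
    rwa [le_div_iff₀ hNI, mul_comm]

end Norm

section Sums

variable {S : Type*} [CommRing S] [IsDedekindDomain S] [Module.Free ℤ S] [Module.Finite ℤ S]
  [CharZero S] {f : Ideal S → ℝ}

lemma sum_idealsNormLE_le_mul (hf : ∀ n, n ≠ ⊥ → 0 ≤ f n) {x y : ℝ} (hy : 0 ≤ y)
    (hyx : y ≤ x) :
    ∑ m ∈ idealsNormLE y, f m ≤ y * ∑ m ∈ idealsNormLE x, f m / absNorm m := by
  calc ∑ m ∈ idealsNormLE y, f m ≤ ∑ m ∈ idealsNormLE y, y * (f m / absNorm m) := by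
        refine sum_le_sum fun m hm => ?_
        obtain ⟨hm0, hmy⟩ := mem_idealsNormLE.1 hm
        have hNm : (0 : ℝ) < absNorm m := Nat.cast_pos.2 (absNorm_pos hm0)
        rw [mul_div_assoc', le_div_iff₀ hNm, mul_comm]
        exact mul_le_mul_of_nonneg_right hmy (hf m hm0)
    _ = y * ∑ m ∈ idealsNormLE y, f m / absNorm m := (mul_sum _ _ _).symm
    _ ≤ y * ∑ m ∈ idealsNormLE x, f m / absNorm m := by
        refine mul_le_mul_of_nonneg_left (sum_le_sum_of_subset_of_nonneg
          (idealsNormLE_mono hyx) fun m hm _ => ?_) hy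
        exact div_nonneg (hf m (mem_idealsNormLE.1 hm).1) (Nat.cast_nonneg _)

lemma sum_mul_log_le (hf : ∀ n, n ≠ ⊥ → 0 ≤ f n) (x : ℝ) :
    (∑ n ∈ idealsNormLE x, f n) * log x ≤
      x * ∑ n ∈ idealsNormLE x, f n / absNorm n +
        ∑ n ∈ idealsNormLE x, f n * log (absNorm n) := by
  rw [sum_mul, mul_sum, ← sum_add_distrib]
  refine sum_le_sum fun n hn => ?_
  obtain ⟨hn0, hnx⟩ := mem_idealsNormLE.1 hn
  have hNn : (0 : ℝ) < absNorm n := Nat.cast_pos.2 (absNorm_pos hn0)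
  have hlog : log x = log (x / absNorm n) + log (absNorm n) := by
    rw [log_div (hNn.trans_le hnx).ne' hNn.ne', sub_add_cancel]
  calc f n * log x = f n * log (x / absNorm n) + f n * log (absNorm n) := by
        rw [hlog, mul_add]
    _ ≤ f n * (x / absNorm n) + f n * log (absNorm n) := by
        gcongr
        · exact hf n hn0
        · exact log_le_self (div_nonneg (hNn.le.trans hnx) hNn.le)
    _ = x * (f n / absNorm n) + f n * log (absNorm n) := by ring

lemma mem_primesNormLE_of_mem_normalizedFactors {x : ℝ} {n p : Ideal S}
    (hn : n ∈ idealsNormLE x) (hp : p ∈ normalizedFactors n) : p ∈ primesNormLE x := by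
  obtain ⟨hn0, hnx⟩ := mem_idealsNormLE.1 hn
  have hpp := prime_of_normalized_factor p hp
  exact mem_primesNormLE.2 ⟨hpp.ne_zero, Ideal.isPrime_of_prime hpp, le_trans (Nat.cast_le.2
    (absNorm_le_of_dvd hn0 (dvd_of_mem_normalizedFactors hp))) hnx⟩

lemma ordProj_mem_and_ordCompl_mem_idealsNormLE {x : ℝ} {n p : Ideal S}
    (hn : n ∈ idealsNormLE x) (hp : p ∈ normalizedFactors n) :
    ordProj p n ∈ idealsNormLE x ∧ ordCompl p n ∈ idealsNormLE (x / absNorm (ordProj p n)) := by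
  obtain ⟨hn0, hnx⟩ := mem_idealsNormLE.1 hn
  refine mem_idealsNormLE_and_mem_idealsNormLE_div.2
    ⟨ordProj_ne_bot hn0 hp, ordCompl_ne_bot hn0 hp, ?_⟩
  rwa [← Nat.cast_mul, ← map_mul, ordProj_mul_ordCompl hn0 hp]

lemma sum_mul_log_absNorm_le_sum_primePow (hf : ∀ n, n ≠ ⊥ → 0 ≤ f n)
    (hf_mult : ∀ m n : Ideal S, m ≠ ⊥ → n ≠ ⊥ → IsCoprime m n → f (m * n) = f m * f n)
    (x : ℝ) :
    ∑ n ∈ idealsNormLE x, f n * log (absNorm n) ≤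
      ∑ p ∈ primesNormLE x, ∑ a ∈ Icc 1 ⌊x⌋₊, f (p ^ a) * log (absNorm (p ^ a)) *
        ∑ m ∈ idealsNormLE (x / absNorm (p ^ a)), f m := by
  let g : (Σ _ : Ideal S × ℕ, Ideal S) → ℝ := fun t =>
    f (t.1.1 ^ t.1.2) * log (absNorm (t.1.1 ^ t.1.2)) * f t.2
  let e : (Σ _ : Ideal S, Ideal S) → (Σ _ : Ideal S × ℕ, Ideal S) := fun t =>
    ⟨(t.2, (normalizedFactors t.1).count t.2), ordCompl t.2 t.1⟩
  calc ∑ n ∈ idealsNormLE x, f n * log (absNorm n)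
      = ∑ t ∈ (idealsNormLE x).sigma fun n => (normalizedFactors n).toFinset, g (e t) := by
        rw [sum_sigma]
        exact sum_congr rfl fun n hn => mul_log_absNorm_eq_sum f hf_mult (mem_idealsNormLE.1 hn).1
    _ ≤ ∑ t ∈ (primesNormLE x ×ˢ Icc 1 ⌊x⌋₊).sigma
          (fun q => idealsNormLE (x / absNorm (q.1 ^ q.2))), g t := by
        refine sum_comp_le_sum_of_injOn ?_ ?_ ?_
        · rintro ⟨n, p⟩ ht
          obtain ⟨hn, hp⟩ := mem_sigma.1 ht
          have hp := Multiset.mem_toFinset.1 hp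
          have hpx := mem_primesNormLE_of_mem_normalizedFactors hn hp
          obtain ⟨hproj, hcompl⟩ := ordProj_mem_and_ordCompl_mem_idealsNormLE hn hp
          have hcx : ((normalizedFactors n).count p : ℝ) ≤ x :=
            (Nat.cast_le.2 (lt_absNorm_pow (mem_primesNormLE.1 hpx).1
              (mem_primesNormLE.1 hpx).2.1.ne_top _).le).trans (mem_idealsNormLE.1 hproj).2
          exact mem_sigma.2 ⟨mem_product.2 ⟨hpx,
            mem_Icc.2 ⟨Multiset.one_le_count_iff_mem.2 hp, Nat.le_floor hcx⟩⟩, hcompl⟩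
        · rintro ⟨n, p⟩ ht ⟨n', p'⟩ ht' he
          obtain ⟨hn, hp⟩ := mem_sigma.1 ht
          obtain ⟨hn', hp'⟩ := mem_sigma.1 ht'
          dsimp only at hn hp hn' hp'
          simp only [e, Sigma.mk.injEq, Prod.mk.injEq, heq_eq_eq] at he
          obtain ⟨⟨rfl, hc⟩, hm⟩ := he
          obtain rfl := eq_of_count_eq_of_ordCompl_eq (mem_idealsNormLE.1 hn).1
            (mem_idealsNormLE.1 hn').1 (Multiset.mem_toFinset.1 hp) (Multiset.mem_toFinset.1 hp')
            hc hm
          rfl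
        · rintro ⟨⟨p, a⟩, m⟩ ht
          obtain ⟨hpa, hm⟩ := mem_sigma.1 ht
          have hpa0 : p ^ a ≠ ⊥ :=
            pow_ne_zero _ (mem_primesNormLE.1 (mem_product.1 hpa).1).1
          exact mul_nonneg (mul_nonneg (hf _ hpa0) (log_absNorm_nonneg hpa0))
            (hf m (mem_idealsNormLE.1 hm).1)
    _ = _ := by
        rw [sum_sigma, sum_product]
        simp_rw [mul_sum]
        rfl

lemma sum_primesNormLE_le {A : ℝ} (hA : 0 ≤ A)
    (hApr : ∀ y : ℝ, 1 < y → ∑ p ∈ primesNormLE y, f p * log (absNorm p) ≤ A * y)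
    {y : ℝ} (hy : 0 ≤ y) :
    ∑ p ∈ primesNormLE y, f p * log (absNorm p) ≤ A * y := by
  rcases lt_or_ge 1 y with hy1 | hy1
  · exact hApr y hy1
  · have hempty : primesNormLE (S := S) y = ∅ := eq_empty_of_forall_notMem fun p hp => by
      obtain ⟨hp0, hp, hpy⟩ := mem_primesNormLE.1 hp
      have h2 : (2 : ℝ) ≤ absNorm p := by exact_mod_cast two_le_absNorm hp0 hp.ne_top
      linarith
    rw [hempty, sum_empty]
    positivity

lemma sum_prime_mul_sum_idealsNormLE_div_le {A : ℝ} (hf : ∀ n, n ≠ ⊥ → 0 ≤ f n) (hA : 0 ≤ A)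
    (hApr : ∀ y : ℝ, 1 < y → ∑ p ∈ primesNormLE y, f p * log (absNorm p) ≤ A * y) (x : ℝ) :
    ∑ p ∈ primesNormLE x, f p * log (absNorm p) * ∑ m ∈ idealsNormLE (x / absNorm p), f m ≤
      A * (x * ∑ m ∈ idealsNormLE x, f m / absNorm m) := by
  have hswap : ∀ p m : Ideal S, p ∈ primesNormLE x ∧ m ∈ idealsNormLE (x / absNorm p) ↔
      p ∈ primesNormLE (x / absNorm m) ∧ m ∈ idealsNormLE x := by
    intro p m
    simp only [primesNormLE, mem_filter]
    have hpm := mem_idealsNormLE_and_mem_idealsNormLE_div (x := x) (I := p) (J := m)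
    have hmp := mem_idealsNormLE_and_mem_idealsNormLE_div (x := x) (I := m) (J := p)
    rw [mul_comm] at hmp
    tauto
  calc ∑ p ∈ primesNormLE x, f p * log (absNorm p) * ∑ m ∈ idealsNormLE (x / absNorm p), f m
      = ∑ m ∈ idealsNormLE x, (∑ p ∈ primesNormLE (x / absNorm m), f p * log (absNorm p)) *
          f m := by
        simp_rw [mul_sum, sum_mul]
        exact sum_comm' hswap
    _ ≤ ∑ m ∈ idealsNormLE x, A * (x / absNorm m) * f m := by
        refine sum_le_sum fun m hm => ?_
        obtain ⟨hm0, hmx⟩ := mem_idealsNormLE.1 hm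
        have hNm : (0 : ℝ) < absNorm m := Nat.cast_pos.2 (absNorm_pos hm0)
        exact mul_le_mul_of_nonneg_right (sum_primesNormLE_le hA hApr
          (div_nonneg (hNm.le.trans hmx) hNm.le)) (hf m hm0)
    _ = A * (x * ∑ m ∈ idealsNormLE x, f m / absNorm m) := by
        rw [mul_sum, mul_sum]
        exact sum_congr rfl fun m _ => by ring

lemma sum_primePow_mul_sum_idealsNormLE_div_le (hf : ∀ n, n ≠ ⊥ → 0 ≤ f n) {x : ℝ}
    (hx : 0 ≤ x) (s : Finset (Ideal S)) (hs : ∀ p ∈ s, p ≠ ⊥) (t : Finset ℕ) :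
    ∑ p ∈ s, ∑ a ∈ t, f (p ^ a) * log (absNorm (p ^ a)) *
        ∑ m ∈ idealsNormLE (x / absNorm (p ^ a)), f m ≤
      (x * ∑ m ∈ idealsNormLE x, f m / absNorm m) *
        ∑ p ∈ s, ∑ a ∈ t, f (p ^ a) / absNorm (p ^ a) * log (absNorm (p ^ a)) := by
  rw [mul_sum]
  refine sum_le_sum fun p hp => ?_
  rw [mul_sum]
  refine sum_le_sum fun a _ => ?_
  have hq : p ^ a ≠ ⊥ := pow_ne_zero _ (hs p hp)
  have hNq : (1 : ℝ) ≤ absNorm (p ^ a) := Nat.one_le_cast.2 (absNorm_pos hq)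
  calc f (p ^ a) * log (absNorm (p ^ a)) * ∑ m ∈ idealsNormLE (x / absNorm (p ^ a)), f m
      ≤ f (p ^ a) * log (absNorm (p ^ a)) *
          (x / absNorm (p ^ a) * ∑ m ∈ idealsNormLE x, f m / absNorm m) :=
        mul_le_mul_of_nonneg_left (sum_idealsNormLE_le_mul hf
          (div_nonneg hx (zero_le_one.trans hNq)) (div_le_self hx hNq))
          (mul_nonneg (hf _ hq) (log_absNorm_nonneg hq))
    _ = (x * ∑ m ∈ idealsNormLE x, f m / absNorm m) *
          (f (p ^ a) / absNorm (p ^ a) * log (absNorm (p ^ a))) := by ring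

lemma sum_mul_log_absNorm_le {A B x : ℝ} (hf : ∀ n, n ≠ ⊥ → 0 ≤ f n)
    (hf_mult : ∀ m n : Ideal S, m ≠ ⊥ → n ≠ ⊥ → IsCoprime m n → f (m * n) = f m * f n)
    (hA : 0 ≤ A)
    (hApr : ∀ y : ℝ, 1 < y → ∑ p ∈ primesNormLE y, f p * log (absNorm p) ≤ A * y)
    (hB : ∑ p ∈ primesNormLE x, ∑ a ∈ Ioc 1 ⌊x⌋₊,
      f (p ^ a) / absNorm (p ^ a) * log (absNorm (p ^ a)) ≤ B) (hx : 1 ≤ x) :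
    ∑ n ∈ idealsNormLE x, f n * log (absNorm n) ≤
      (A + B) * (x * ∑ m ∈ idealsNormLE x, f m / absNorm m) := by
  have hT : 0 ≤ x * ∑ m ∈ idealsNormLE x, f m / absNorm m :=
    mul_nonneg (zero_le_one.trans hx)
      (sum_nonneg fun m hm => div_nonneg (hf m (mem_idealsNormLE.1 hm).1) (Nat.cast_nonneg _))
  calc ∑ n ∈ idealsNormLE x, f n * log (absNorm n)
      ≤ ∑ p ∈ primesNormLE x, ∑ a ∈ Icc 1 ⌊x⌋₊, f (p ^ a) * log (absNorm (p ^ a)) *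
          ∑ m ∈ idealsNormLE (x / absNorm (p ^ a)), f m :=
        sum_mul_log_absNorm_le_sum_primePow hf hf_mult x
    _ = ∑ p ∈ primesNormLE x, f p * log (absNorm p) * ∑ m ∈ idealsNormLE (x / absNorm p), f m +
          ∑ p ∈ primesNormLE x, ∑ a ∈ Ioc 1 ⌊x⌋₊, f (p ^ a) * log (absNorm (p ^ a)) *
            ∑ m ∈ idealsNormLE (x / absNorm (p ^ a)), f m := by
        rw [← sum_add_distrib]
        refine sum_congr rfl fun p _ => ?_
        rw [Icc_eq_cons_Ioc ((Nat.one_le_floor_iff x).2 hx), sum_cons, pow_one]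
    _ ≤ A * (x * ∑ m ∈ idealsNormLE x, f m / absNorm m) +
          (x * ∑ m ∈ idealsNormLE x, f m / absNorm m) * B :=
        add_le_add (sum_prime_mul_sum_idealsNormLE_div_le hf hA hApr x)
          ((sum_primePow_mul_sum_idealsNormLE_div_le hf (zero_le_one.trans hx) _
            (fun p hp => (mem_primesNormLE.1 hp).1) _).trans
            (mul_le_mul_of_nonneg_left hB hT))
    _ = (A + B) * (x * ∑ m ∈ idealsNormLE x, f m / absNorm m) := by ring

end Sums

theorem sum_multiplicative_le_of_prime_bounds_general
    (F : Type*) [Field F] [NumberField F]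
    (f : Ideal (𝓞 F) → ℝ)
    (hf_nonneg : ∀ n : Ideal (𝓞 F), n ≠ ⊥ → 0 ≤ f n)
    (hf_mult : ∀ m n : Ideal (𝓞 F), m ≠ ⊥ → n ≠ ⊥ → IsCoprime m n →
      f (m * n) = f m * f n)
    (A B : ℝ) (hA : 0 < A)
    (hApr : ∀ x : ℝ, 1 < x →
      (∑' p : {p : Ideal (𝓞 F) // p ≠ ⊥ ∧ p.IsPrime ∧ (Ideal.absNorm p : ℝ) ≤ x},
        f p.1 * Real.log (Ideal.absNorm p.1)) ≤ A * x)
    (hBsummable : Summable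
      (fun q : {p : Ideal (𝓞 F) // p ≠ ⊥ ∧ p.IsPrime} × {α : ℕ // 2 ≤ α} =>
        f (q.1.1 ^ q.2.1) / (Ideal.absNorm (q.1.1 ^ q.2.1) : ℝ) *
          Real.log (Ideal.absNorm (q.1.1 ^ q.2.1))))
    (hBpr : (∑' q : {p : Ideal (𝓞 F) // p ≠ ⊥ ∧ p.IsPrime} × {α : ℕ // 2 ≤ α},
        f (q.1.1 ^ q.2.1) / (Ideal.absNorm (q.1.1 ^ q.2.1) : ℝ) *
          Real.log (Ideal.absNorm (q.1.1 ^ q.2.1))) ≤ B) :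
    ∀ x : ℝ, 1 < x →
      (∑' n : {n : Ideal (𝓞 F) // n ≠ ⊥ ∧ (Ideal.absNorm n : ℝ) ≤ x}, f n.1)
        ≤ (A + B + 1) * (x / Real.log x) *
          ∑' n : {n : Ideal (𝓞 F) // n ≠ ⊥ ∧ (Ideal.absNorm n : ℝ) ≤ x},
            f n.1 / (Ideal.absNorm n.1 : ℝ) := by
  intro x hx
  have hApr' (y : ℝ) (hy : 1 < y) : ∑ p ∈ primesNormLE y, f p * log (absNorm p) ≤ A * y := by
    rw [← tsum_subtype_eq_sum fun p => mem_primesNormLE.symm]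
    exact hApr y hy
  have hB : ∑ p ∈ primesNormLE x, ∑ a ∈ Ioc 1 ⌊x⌋₊,
      f (p ^ a) / absNorm (p ^ a) * log (absNorm (p ^ a)) ≤ B := by
    refine (sum_sum_le_tsum (fun p a hp _ => ?_) hBsummable
      (fun p hp => ?_) fun a ha => (mem_Ioc.1 ha).1).trans hBpr
    · have hpa : p ^ a ≠ ⊥ := pow_ne_zero _ hp.1
      exact mul_nonneg (div_nonneg (hf_nonneg _ hpa) (Nat.cast_nonneg _)) (log_absNorm_nonneg hpa)
    · exact ⟨(mem_primesNormLE.1 hp).1, (mem_primesNormLE.1 hp).2.1⟩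
  have hlog := sum_mul_log_le hf_nonneg x
  have hchebyshev := sum_mul_log_absNorm_le hf_nonneg hf_mult hA.le hApr' hB hx.le
  rw [tsum_subtype_eq_sum fun n => mem_idealsNormLE.symm,
    tsum_subtype_eq_sum (fun n => mem_idealsNormLE.symm) fun n => f n / absNorm n]
  rw [mul_div_assoc', div_mul_eq_mul_div, le_div_iff₀ (log_pos hx)]
  linarith

/-- (Hall–Tenenbaum type estimate over a number field.)
Let `F` be a number field, and let `f` be a non-negative multiplicative function on the
nonzero ideals of `𝓞 F` with `f(𝓞 F) = 1`. If there are positive constants `A`, `B` with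
`∑_{N(p) ≤ x} f(p) log N(p) ≤ A x` for all `x > 1` (sum over nonzero prime ideals) and
`∑_p ∑_{α ≥ 2} f(p^α) log N(p^α) / N(p^α) ≤ B`, then for all `x > 1`,
`∑_{N(n) ≤ x} f(n) ≤ (A + B + 1) (x / log x) ∑_{N(n) ≤ x} f(n)/N(n)`. -/
theorem sum_multiplicative_le_of_prime_bounds
    (F : Type*) [Field F] [NumberField F]
    (f : Ideal (𝓞 F) → ℝ)
    (hf_nonneg : ∀ n : Ideal (𝓞 F), n ≠ ⊥ → 0 ≤ f n)
    (hf_one : f (1 : Ideal (𝓞 F)) = 1)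
    (hf_mult : ∀ m n : Ideal (𝓞 F), m ≠ ⊥ → n ≠ ⊥ → IsCoprime m n →
      f (m * n) = f m * f n)
    (A B : ℝ) (hA : 0 < A) (hB : 0 < B)
    (hApr : ∀ x : ℝ, 1 < x →
      (∑' p : {p : Ideal (𝓞 F) // p ≠ ⊥ ∧ p.IsPrime ∧ (Ideal.absNorm p : ℝ) ≤ x},
        f p.1 * Real.log (Ideal.absNorm p.1)) ≤ A * x)
    (hBsummable : Summable
      (fun q : {p : Ideal (𝓞 F) // p ≠ ⊥ ∧ p.IsPrime} × {α : ℕ // 2 ≤ α} =>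
        f (q.1.1 ^ q.2.1) / (Ideal.absNorm (q.1.1 ^ q.2.1) : ℝ) *
          Real.log (Ideal.absNorm (q.1.1 ^ q.2.1))))
    (hBpr : (∑' q : {p : Ideal (𝓞 F) // p ≠ ⊥ ∧ p.IsPrime} × {α : ℕ // 2 ≤ α},
        f (q.1.1 ^ q.2.1) / (Ideal.absNorm (q.1.1 ^ q.2.1) : ℝ) *
          Real.log (Ideal.absNorm (q.1.1 ^ q.2.1))) ≤ B) :
    ∀ x : ℝ, 1 < x →
      (∑' n : {n : Ideal (𝓞 F) // n ≠ ⊥ ∧ (Ideal.absNorm n : ℝ) ≤ x}, f n.1)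
        ≤ (A + B + 1) * (x / Real.log x) *
          ∑' n : {n : Ideal (𝓞 F) // n ≠ ⊥ ∧ (Ideal.absNorm n : ℝ) ≤ x},
            f n.1 / (Ideal.absNorm n.1 : ℝ) :=
  sum_multiplicative_le_of_prime_bounds_general F f hf_nonneg hf_mult A B hA hApr hBsummable hBpr
end

section
/- Let $\theta$ be a real number such that $\theta/(2\pi)$ is irrational. Then there exist infinitely many positive integers $n$ such that $0 < |\sin((n+1)\theta)| \le \dfrac{2\pi}{n+1}$. -/
/-!
Write `ξ = θ / 2π`. A rational `p / q` with `|ξ - p / q| < 1 / q²` gives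
`|sin (q θ)| = |sin (2π (q ξ - p))| ≤ 2π |q ξ - p| < 2π / q`, and `sin (q θ) ≠ 0` because `2 q ξ`
is irrational. Such Dirichlet approximations exist with arbitrarily large denominators: the
rationals of denominator at most `D` stay a positive distance away from `ξ`.
-/

open Real

lemma abs_sin_two_pi_mul_le (x : ℝ) (j : ℤ) : |sin (2 * π * x)| ≤ 2 * π * |x - j| :=
  calc |sin (2 * π * x)| = |sin (2 * π * (x - j))| := by
        rw [mul_sub, mul_comm (2 * π) (j : ℝ), sin_sub_int_mul_two_pi]
    _ ≤ |2 * π * (x - j)| := abs_sin_le_abs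
    _ = 2 * π * |x - j| := by rw [abs_mul, abs_of_pos two_pi_pos]

lemma abs_sin_two_pi_den_mul_lt {ξ : ℝ} {q : ℚ} (hq : |ξ - q| < 1 / (q.den : ℝ) ^ 2) :
    |sin (2 * π * (q.den * ξ))| < 2 * π / q.den := by
  have hden : (0 : ℝ) < q.den := by exact_mod_cast q.pos
  have hnum : (q.num : ℝ) = q.den * q := by
    rw [mul_comm]; exact_mod_cast (Rat.mul_den_eq_num q).symm
  calc |sin (2 * π * (q.den * ξ))| ≤ 2 * π * |q.den * ξ - q.num| := abs_sin_two_pi_mul_le _ _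
    _ = 2 * π * q.den * |ξ - q| := by
        rw [hnum, ← mul_sub, abs_mul, abs_of_pos hden]; ring
    _ < 2 * π * q.den * (1 / (q.den : ℝ) ^ 2) := by gcongr
    _ = 2 * π / q.den := by field_simp

lemma Irrational.sin_two_pi_mul_ne_zero {x : ℝ} (hx : Irrational x) : sin (2 * π * x) ≠ 0 := by
  rw [Ne, sin_eq_zero_iff]
  rintro ⟨n, hn⟩
  refine (hx.natCast_mul two_ne_zero).ne_int n ?_
  have := pi_pos
  push_cast
  nlinarith

lemma Irrational.exists_rat_abs_sub_lt_one_div_den_sq_and_lt_den {ξ : ℝ} (hξ : Irrational ξ)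
    (D : ℕ) : ∃ q : ℚ, |ξ - q| < 1 / (q.den : ℝ) ^ 2 ∧ D < q.den := by
  obtain ⟨ε, hε, hfar⟩ :=
    Metric.eventually_nhds_iff.1 (hξ.eventually_forall_le_dist_cast_rat_of_den_le D)
  obtain ⟨q, hξq, hqε⟩ := exists_rat_btwn (lt_add_of_pos_right ξ (half_pos hε))
  obtain ⟨q', hgood, hcloser⟩ := exists_rat_abs_sub_lt_and_lt_of_irrational hξ q
  refine ⟨q', hgood, not_le.1 fun hD => ?_⟩
  have hfar' : ε / 2 ≤ |ξ - q'| :=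
    hfar (by rw [dist_zero_right, norm_of_nonneg (by positivity)]; linarith) q' hD
  have hnear : |ξ - q| < ε / 2 := by rw [abs_sub_lt_iff]; constructor <;> linarith
  linarith

/-- If `θ/(2π)` is irrational, then there are infinitely many positive
integers `n` with `0 < |sin ((n+1) θ)| ≤ 2π/(n+1)`. -/
theorem infinitely_many_small_sin_values
    (θ : ℝ) (h : Irrational (θ / (2 * Real.pi))) :
    {n : ℕ | 0 < n ∧ 0 < |Real.sin ((n + 1) * θ)| ∧
      |Real.sin ((n + 1) * θ)| ≤ 2 * Real.pi / (n + 1)}.Infinite := by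
  have hθ (k : ℝ) : k * θ = 2 * π * (k * (θ / (2 * π))) := by field_simp
  refine Set.infinite_of_forall_exists_gt fun m => ?_
  obtain ⟨q, hq, hmq⟩ := h.exists_rat_abs_sub_lt_one_div_den_sq_and_lt_den (m + 1)
  have hden : ((q.den - 1 : ℕ) : ℝ) + 1 = q.den := by
    rw [Nat.cast_sub q.pos, Nat.cast_one, sub_add_cancel]
  refine ⟨q.den - 1, ⟨by omega, ?_, ?_⟩, by omega⟩ <;> rw [hden]
  · exact abs_pos.2 (hθ _ ▸ (h.natCast_mul q.den_ne_zero).sin_two_pi_mul_ne_zero)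
  · exact hθ _ ▸ (abs_sin_two_pi_den_mul_lt hq).le
end

section
/- Define $I(\gamma) = \dfrac{2}{\pi} \int_{0}^{\pi} |2\cos\theta|^{\gamma} \sin^{2}\theta\, d\theta$ for $\gamma \ge 0$. Then $I(2) = 1$, and there exists an absolute constant $c > 0$ such that for all $\gamma \in (0,1)$ one has $I(\gamma) \le 1 - \dfrac{\gamma}{2} + c\,\gamma^{2}$. -/
/-!
For `t = |2 cos θ| ∈ [0, 2]` and `0 ≤ γ ≤ 1` we have `γ log t ≤ 1`, hence
`t ^ γ = exp (γ log t) ≤ 1 + γ log t + (γ log t) ^ 2`. Integrating against `sin² θ` bounds `I(γ)`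
by `1 + γ a + γ² C` with `a = (2/π) ∫₀^π log |2 cos θ| sin² θ dθ`. We have `a = -1/2`: the
integral of `log |2 cos θ|` over `[0, π]` vanishes (the classical value of `∫ log sin`), and
`sin θ cos θ log |2 cos θ|`, which is continuous through `θ = π/2` and vanishes at `0` and `π`,
has derivative `log |2 cos θ| (1 - 2 sin² θ) - sin² θ` off `π/2`. The constant `C` is finite
because `log² t ≤ 16 t^(-1/2)` and, by Jordan's inequality, `|2 cos θ| ≥ |θ - π/2|`.
-/

open Real MeasureTheory intervalIntegral Set
open scoped Interval

theorem Real.exp_le_one_add_add_sq {x : ℝ} (hx : x ≤ 1) : exp x ≤ 1 + x + x ^ 2 := by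
  rcases le_or_gt (-1) x with hx' | hx'
  · have := abs_exp_sub_one_sub_id_le (abs_le.2 ⟨hx', hx⟩)
    linarith [(abs_le.1 this).2]
  · nlinarith [exp_le_one_iff.2 (by linarith : x ≤ 0)]

theorem Real.rpow_le_one_add_mul_log_add_sq {t γ : ℝ} (ht : 0 ≤ t) (h : γ * log t ≤ 1) :
    t ^ γ ≤ 1 + γ * log t + (γ * log t) ^ 2 := by
  rcases ht.eq_or_lt with rfl | ht
  · simpa using zero_rpow_le_one γ
  · rw [rpow_def_of_pos ht, mul_comm]
    exact exp_le_one_add_add_sq h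

theorem Real.sq_log_le_sixteen_mul_rpow_neg_half {t : ℝ} (ht : 0 ≤ t) (ht₂ : t ≤ 2) :
    log t ^ 2 ≤ 16 * t ^ (-(1 / 2) : ℝ) := by
  rcases ht.eq_or_lt with rfl | ht
  · simp
  rcases le_or_gt t 1 with ht₁ | ht₁
  · have hq : 0 < t ^ (1 / 4 : ℝ) := rpow_pos_of_pos ht _
    have key := abs_log_mul_self_rpow_lt t (1 / 4) ht ht₁ (by norm_num)
    have hsq : t ^ (-(1 / 2) : ℝ) * (t ^ (1 / 4 : ℝ)) ^ 2 = 1 := by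
      rw [← rpow_natCast, ← rpow_mul ht.le, ← rpow_add ht]; norm_num
    rw [abs_mul, abs_of_pos hq] at key
    have h16 : (|log t| * t ^ (1 / 4 : ℝ)) ^ 2 < 16 := by
      nlinarith [mul_nonneg (abs_nonneg (log t)) hq.le]
    calc log t ^ 2 = t ^ (-(1 / 2) : ℝ) * (|log t| * t ^ (1 / 4 : ℝ)) ^ 2 := by
          rw [mul_pow, sq_abs]; linear_combination (-log t ^ 2) * hsq
      _ ≤ 16 * t ^ (-(1 / 2) : ℝ) := by
          nlinarith [rpow_nonneg ht.le (-(1 / 2) : ℝ)]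
  · have hlog : log t ≤ 1 := by linarith [log_le_sub_one_of_pos ht]
    have hinv : t ^ (-1 : ℝ) ≤ t ^ (-(1 / 2) : ℝ) :=
      rpow_le_rpow_of_exponent_le ht₁.le (by norm_num)
    rw [rpow_neg_one] at hinv
    have : 1 / 2 ≤ t⁻¹ := by rw [inv_eq_one_div]; gcongr
    nlinarith [log_nonneg ht₁.le]

theorem intervalIntegrable_abs_rpow {r : ℝ} (hr : -1 < r) (a b : ℝ) :
    IntervalIntegrable (fun x => |x| ^ r) volume a b := by
  have hnonneg : ∀ c, 0 ≤ c → IntervalIntegrable (fun x => |x| ^ r) volume 0 c := by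
    intro c hc
    refine (intervalIntegrable_rpow' hr).congr fun x hx => ?_
    rw [uIoc_of_le hc] at hx
    simp [abs_of_pos hx.1]
  have hzero : ∀ c, IntervalIntegrable (fun x => |x| ^ r) volume 0 c := by
    intro c
    rcases le_total 0 c with hc | hc
    · exact hnonneg c hc
    · simpa using ((IntervalIntegrable.iff_comp_neg).mp (hnonneg (-c) (by linarith)))
  exact (hzero a).symm.trans (hzero b)

theorem Real.abs_two_mul_cos_le_two (θ : ℝ) : |2 * cos θ| ≤ 2 := by
  simpa [abs_mul] using abs_cos_le_one θ

theorem Real.abs_sub_pi_div_two_le_abs_two_mul_cos {θ : ℝ} (h : θ ∈ Icc 0 π) :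
    |θ - π / 2| ≤ |2 * cos θ| := by
  have hπ : 1 ≤ 2 / π * 2 := by rw [div_mul_eq_mul_div, le_div_iff₀ pi_pos]; linarith [pi_le_four]
  obtain ⟨h₀, h₁⟩ := h
  rcases le_total θ (π / 2) with hθ | hθ
  · have := mul_le_sin (x := π / 2 - θ) (by linarith) (by linarith)
    rw [sin_pi_div_two_sub] at this
    rw [abs_of_nonpos (by linarith), abs_of_nonneg (by nlinarith [pi_pos])]
    nlinarith
  · have := mul_le_sin (x := θ - π / 2) (by linarith) (by linarith)
    rw [sin_sub_pi_div_two] at this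
    rw [abs_of_nonneg (by linarith), abs_of_nonpos (by nlinarith [pi_pos])]
    nlinarith

-- `Real.log |x| = Real.log x`, so `log (2 * cos θ)` stands for `log |2 cos θ|` throughout.
theorem intervalIntegrable_log_two_mul_cos (a b : ℝ) :
    IntervalIntegrable (fun θ => log (2 * cos θ)) volume a b :=
  (analyticOnNhd_const.mul analyticOnNhd_cos).meromorphicOn.intervalIntegrable_log

theorem intervalIntegrable_sq_log_two_mul_cos :
    IntervalIntegrable (fun θ => log (2 * cos θ) ^ 2) volume 0 π := by
  have hdom : IntervalIntegrable (fun θ => 16 * |θ - π / 2| ^ (-(1 / 2) : ℝ)) volume 0 π := by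
    simpa using ((intervalIntegrable_abs_rpow (by norm_num) (0 - π / 2) (π - π / 2)).comp_sub_right
      (π / 2)).const_mul 16
  refine hdom.mono_fun' ((measurable_log.comp (by fun_prop)).pow_const 2).aestronglyMeasurable ?_
  filter_upwards [ae_restrict_mem measurableSet_uIoc] with θ hθ
  rw [uIoc_of_le pi_pos.le] at hθ
  rw [norm_of_nonneg (sq_nonneg _)]
  rcases eq_or_ne θ (π / 2) with rfl | hne
  · simp
  have hjordan := abs_sub_pi_div_two_le_abs_two_mul_cos (Ioc_subset_Icc_self hθ)
  have hpos : 0 < |θ - π / 2| := abs_pos.2 (sub_ne_zero.2 hne)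
  calc log (2 * cos θ) ^ 2 = log |2 * cos θ| ^ 2 := by rw [log_abs]
    _ ≤ 16 * |2 * cos θ| ^ (-(1 / 2) : ℝ) :=
        sq_log_le_sixteen_mul_rpow_neg_half (abs_nonneg _) (abs_two_mul_cos_le_two θ)
    _ ≤ 16 * |θ - π / 2| ^ (-(1 / 2) : ℝ) := by
        gcongr 16 * ?_
        exact rpow_le_rpow_of_nonpos hpos hjordan (by norm_num)

theorem integral_log_cos_zero_pi : ∫ x in 0..π, log (cos x) = -log 2 * π := by
  have hper : Function.Periodic (fun x => log (sin x)) π := fun x => by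
    simp [sin_add_pi, log_neg_eq_log]
  calc ∫ x in 0..π, log (cos x) = ∫ x in 0..π, log (sin (x + π / 2)) := by
        simp [sin_add_pi_div_two]
    _ = ∫ x in π / 2..π / 2 + π, log (sin x) := by
        rw [integral_comp_add_right (fun x => log (sin x))]; ring_nf
    _ = ∫ x in 0..0 + π, log (sin x) := hper.intervalIntegral_add_eq _ _
    _ = -log 2 * π := by rw [zero_add, integral_log_sin_zero_pi]

theorem Real.cos_ne_zero_of_mem_Icc {θ : ℝ} (h : θ ∈ Icc 0 π) (hne : θ ≠ π / 2) : cos θ ≠ 0 :=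
  fun hcos => hne <| injOn_cos h ⟨by linarith [pi_pos], by linarith [pi_pos]⟩
    (hcos.trans cos_pi_div_two.symm)

theorem integral_log_two_mul_cos : ∫ θ in 0..π, log (2 * cos θ) = 0 := by
  have hsplit : ∀ᵐ θ, θ ∈ Ι 0 π → log (2 * cos θ) = log 2 + log (cos θ) := by
    filter_upwards [volume.ae_ne (π / 2)] with θ hne hθ
    rw [uIoc_of_le pi_pos.le] at hθ
    exact log_mul two_ne_zero (cos_ne_zero_of_mem_Icc ⟨hθ.1.le, hθ.2⟩ hne)
  have hlog_cos : IntervalIntegrable (fun θ => log (cos θ)) volume 0 π := intervalIntegrable_log_cos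
  rw [integral_congr_ae hsplit, integral_add intervalIntegrable_const hlog_cos,
    integral_log_cos_zero_pi, intervalIntegral.integral_const, smul_eq_mul, sub_zero]
  ring

theorem hasDerivAt_sin_mul_cos_mul_log_two_mul_cos {θ : ℝ} (h : cos θ ≠ 0) :
    HasDerivAt (fun x => sin x * cos x * log (2 * cos x))
      (log (2 * cos θ) - 2 * (log (2 * cos θ) * sin θ ^ 2) - sin θ ^ 2) θ := by
  have hlog := ((hasDerivAt_cos θ).const_mul 2).log (mul_ne_zero two_ne_zero h)
  have hprod := ((hasDerivAt_sin θ).mul (hasDerivAt_cos θ)).mul hlog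
  refine (hprod : HasDerivAt (fun x => sin x * cos x * log (2 * cos x)) _ θ).congr_deriv ?_
  have hquot : sin θ * cos θ * (2 * -sin θ / (2 * cos θ)) = -sin θ ^ 2 := by field_simp
  simp only [Pi.mul_apply, hquot]
  linear_combination log (2 * cos θ) * sin_sq_add_cos_sq θ

theorem integral_log_two_mul_cos_mul_sin_sq :
    ∫ θ in 0..π, log (2 * cos θ) * sin θ ^ 2 = -(π / 4) := by
  have hlog := intervalIntegrable_log_two_mul_cos 0 π
  have hlog_sin : IntervalIntegrable (fun θ => log (2 * cos θ) * sin θ ^ 2) volume 0 π :=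
    hlog.mul_continuousOn (by fun_prop)
  have hsin : IntervalIntegrable (fun θ => sin θ ^ 2) volume 0 π := by
    apply Continuous.intervalIntegrable; fun_prop
  have hcont : Continuous fun x => sin x * cos x * log (2 * cos x) := by
    have : Continuous fun x => 2 * cos x * log (2 * cos x) := continuous_mul_log.comp (by fun_prop)
    exact ((continuous_sin.mul this).div_const 2).congr fun x => by simp only [Pi.mul_apply]; ring
  have hftc := integral_eq_of_hasDerivAt_off_countable_of_le _ _ pi_pos.le
    (countable_singleton (π / 2)) hcont.continuousOn
    (fun θ hθ => hasDerivAt_sin_mul_cos_mul_log_two_mul_cos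
      (cos_ne_zero_of_mem_Icc (Ioo_subset_Icc_self hθ.1) hθ.2))
    ((hlog.sub (hlog_sin.const_mul 2)).sub hsin)
  rw [integral_sub (hlog.sub (hlog_sin.const_mul 2)) hsin, integral_sub hlog (hlog_sin.const_mul 2),
    intervalIntegral.integral_const_mul, integral_log_two_mul_cos, integral_sin_sq] at hftc
  simp only [sin_zero, sin_pi, zero_mul] at hftc
  linarith

theorem Real.abs_two_mul_cos_rpow_le_one_add_mul_log_add_sq {γ : ℝ} (θ : ℝ) (hγ₀ : 0 ≤ γ)
    (hγ₁ : γ ≤ 1) :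
    |2 * cos θ| ^ γ ≤ 1 + γ * log (2 * cos θ) + (γ * log (2 * cos θ)) ^ 2 := by
  have hlog : log (2 * cos θ) ≤ 1 := by
    rw [← log_abs]
    have := abs_two_mul_cos_le_two θ
    rcases (abs_nonneg (2 * cos θ)).eq_or_lt with h | h
    · simp [← h]
    · linarith [log_le_sub_one_of_pos h]
  rw [← log_abs]
  refine rpow_le_one_add_mul_log_add_sq (abs_nonneg _) ?_
  rw [log_abs]
  rcases le_total 0 (log (2 * cos θ)) with h | h <;> nlinarith

noncomputable def satoTateAbsMoment (γ : ℝ) : ℝ :=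
  2 / π * ∫ θ in 0..π, |2 * cos θ| ^ γ * sin θ ^ 2

theorem satoTateAbsMoment_two : satoTateAbsMoment 2 = 1 := by
  have hsq : ∀ θ, |2 * cos θ| ^ (2 : ℝ) * sin θ ^ 2 = 4 * (sin θ ^ 2 * cos θ ^ 2) := fun θ => by
    rw [rpow_two, sq_abs]; ring
  have h4π : sin (4 * π) = 0 := by exact_mod_cast sin_nat_mul_pi 4
  simp only [satoTateAbsMoment, hsq, intervalIntegral.integral_const_mul,
    integral_sin_sq_mul_cos_sq, h4π, mul_zero, sin_zero, sub_zero]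
  field_simp
  ring

theorem satoTateAbsMoment_le {γ : ℝ} (hγ₀ : 0 ≤ γ) (hγ₁ : γ ≤ 1) :
    satoTateAbsMoment γ ≤
      1 - γ / 2 + (2 / π * ∫ θ in 0..π, log (2 * cos θ) ^ 2 * sin θ ^ 2) * γ ^ 2 := by
  have hsin : IntervalIntegrable (fun θ => sin θ ^ 2) volume 0 π := by
    apply Continuous.intervalIntegrable; fun_prop
  have hlog : IntervalIntegrable (fun θ => log (2 * cos θ) * sin θ ^ 2) volume 0 π :=
    (intervalIntegrable_log_two_mul_cos 0 π).mul_continuousOn (by fun_prop)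
  have hlog_sq : IntervalIntegrable (fun θ => log (2 * cos θ) ^ 2 * sin θ ^ 2) volume 0 π :=
    intervalIntegrable_sq_log_two_mul_cos.mul_continuousOn (by fun_prop)
  have hmoment : IntervalIntegrable (fun θ => |2 * cos θ| ^ γ * sin θ ^ 2) volume 0 π := by
    apply Continuous.intervalIntegrable
    exact ((by fun_prop : Continuous fun θ => |2 * cos θ|).rpow_const fun _ => Or.inr hγ₀).mul
      (by fun_prop)
  have hbound : ∫ θ in 0..π, |2 * cos θ| ^ γ * sin θ ^ 2 ≤
      ∫ θ in 0..π, (sin θ ^ 2 + γ * (log (2 * cos θ) * sin θ ^ 2)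
        + γ ^ 2 * (log (2 * cos θ) ^ 2 * sin θ ^ 2)) := by
    refine integral_mono_on pi_pos.le hmoment
      ((hsin.add (hlog.const_mul γ)).add (hlog_sq.const_mul (γ ^ 2))) fun θ _ => ?_
    have := mul_le_mul_of_nonneg_right
      (abs_two_mul_cos_rpow_le_one_add_mul_log_add_sq θ hγ₀ hγ₁) (sq_nonneg (sin θ))
    linarith
  rw [integral_add (hsin.add (hlog.const_mul γ)) (hlog_sq.const_mul (γ ^ 2)),
    integral_add hsin (hlog.const_mul γ), intervalIntegral.integral_const_mul,
    intervalIntegral.integral_const_mul, integral_sin_sq, integral_log_two_mul_cos_mul_sin_sq]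
    at hbound
  simp only [sin_zero, sin_pi, zero_mul, sub_zero, zero_add] at hbound
  calc satoTateAbsMoment γ ≤ 2 / π * (π / 2 + γ * -(π / 4)
        + γ ^ 2 * ∫ θ in 0..π, log (2 * cos θ) ^ 2 * sin θ ^ 2) := by
        unfold satoTateAbsMoment; gcongr
    _ = _ := by field_simp; ring

/-- Let `I(γ) = (2/π) ∫_0^π |2 cos θ|^γ sin² θ dθ`. Then `I(2) = 1` and
there is an absolute constant `c > 0` such that `I(γ) ≤ 1 - γ/2 + c γ²` for all
`γ ∈ (0,1)`. -/
theorem satoTate_moment_estimates :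
    ((2 / Real.pi) *
        (∫ θ in (0 : ℝ)..Real.pi, |2 * Real.cos θ| ^ ((2 : ℝ)) * Real.sin θ ^ 2) = 1) ∧
    ∃ c : ℝ, 0 < c ∧ ∀ γ : ℝ, 0 < γ → γ < 1 →
      (2 / Real.pi) * (∫ θ in (0 : ℝ)..Real.pi, |2 * Real.cos θ| ^ γ * Real.sin θ ^ 2)
        ≤ 1 - γ / 2 + c * γ ^ 2 := by
  refine ⟨satoTateAbsMoment_two, ?_⟩
  set C := 2 / π * ∫ θ in 0..π, log (2 * cos θ) ^ 2 * sin θ ^ 2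
  have hC : 0 ≤ C := by
    have : 0 ≤ ∫ θ in 0..π, log (2 * cos θ) ^ 2 * sin θ ^ 2 :=
      integral_nonneg pi_pos.le fun θ _ => by positivity
    positivity
  refine ⟨C + 1, by linarith, fun γ hγ₀ hγ₁ => ?_⟩
  calc satoTateAbsMoment γ ≤ 1 - γ / 2 + C * γ ^ 2 := satoTateAbsMoment_le hγ₀.le hγ₁.le
    _ ≤ 1 - γ / 2 + (C + 1) * γ ^ 2 := by gcongr; linarith
end
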